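/- Let H_pen be the block penalty Hamiltonian on blocks a,b,c with |g_z^{(b)}| ≠ |g_z^{(c)}|, pseudoinverse H_pen⁻¹, and zero-eigenspace projector P₀. Set A := Z_i^{(a)} X_j^{(b)} and B := Z_i^{(a)} X_k^{(c)} for any i,j,k ∈ {1,2,3,4} (A and B share the same physical Z qubit in block a). Then P₀ A H_pen⁻¹ B P₀ = 0 and P₀ B H_pen⁻¹ A P₀ = 0. -/

import Mathlib

open Matrix Kronecker

noncomputable section

def PauliX : Matrix (Fin 2) (Fin 2) ℂ := !![0, 1; 1, 0]
def PauliY : Matrix (Fin 2) (Fin 2) ℂ := !![0, -Complex.I; Complex.I, 0]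
def PauliZ : Matrix (Fin 2) (Fin 2) ℂ := !![1, 0; 0, -1]

/-- The single-qubit operator `A` acting on qubit `i` of a register of qubits
indexed by `ι` (identity on all other qubits). -/
def pauliAt {ι : Type*} [Fintype ι] [DecidableEq ι] (A : Matrix (Fin 2) (Fin 2) ℂ)
    (i : ι) : Matrix (ι → Fin 2) (ι → Fin 2) ℂ :=
  fun f g => A (f i) (g i) * ∏ j ∈ Finset.univ.erase i, (if f j = g j then 1 else 0)

/-- The block penalty Hamiltonian on `n` blocks of 4 qubits:
`H_pen = Σ_b (g_x⁽ᵇ⁾ X₁⁽ᵇ⁾X₂⁽ᵇ⁾ + g_z⁽ᵇ⁾ Z₁⁽ᵇ⁾Z₂⁽ᵇ⁾ + g_x⁽ᵇ⁾ X₃⁽ᵇ⁾X₄⁽ᵇ⁾ + g_z⁽ᵇ⁾ Z₃⁽ᵇ⁾Z₄⁽ᵇ⁾)`. -/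
def HpenBlocks (n : ℕ) (gx gz : Fin n → ℝ) :
    Matrix (Fin n × Fin 4 → Fin 2) (Fin n × Fin 4 → Fin 2) ℂ :=
  ∑ b : Fin n,
    ((gx b : ℂ) • (pauliAt PauliX (b, (0 : Fin 4)) * pauliAt PauliX (b, (1 : Fin 4))) +
     (gz b : ℂ) • (pauliAt PauliZ (b, (0 : Fin 4)) * pauliAt PauliZ (b, (1 : Fin 4))) +
     (gx b : ℂ) • (pauliAt PauliX (b, (2 : Fin 4)) * pauliAt PauliX (b, (3 : Fin 4))) +
     (gz b : ℂ) • (pauliAt PauliZ (b, (2 : Fin 4)) * pauliAt PauliZ (b, (3 : Fin 4))))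

/-! Everything that commutes with `H` commutes with the kernel projection `P₀` and with the
pseudo-inverse. Since `A = Z_a X_b` is an involution and `A B = X_b X_c`, we have
`P₀ A H⁻¹ B P₀ = P₀ (A H⁻¹ A) (X_b X_c) P₀`, where `A H⁻¹ A` commutes with `H`.
Conjugation by `V = X_b X_c` flips the signs of the two `Z Z` terms `g_b τ_b`, `g_c τ_c` of `H`
that anticommute with it, so `H V = V H + D V` with `D = 2 g_b τ_b + 2 g_c τ_c`; as `V` anticommutes
with `D` and `H P₀ = 0`, this gives `P₀ (A H⁻¹ A) V P₀ D = 0`. Finally `D` is invertible because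
`(β τ_b + γ τ_c)(β τ_b - γ τ_c) = β² - γ²` and `|g_b| ≠ |g_c|`. -/

section PseudoInverse

variable {R : Type*} [Ring R] {H P₀ G K : R}

theorem kerProj_mul_eq_zero (hHP : H * P₀ = 0) (hGH : G * H = 1 - P₀) (hHG : H * G = 1 - P₀) :
    P₀ * H = 0 := by
  have h : H * G * H = H - P₀ * H := by rw [hHG, sub_mul, one_mul]
  rw [mul_assoc, hGH, mul_sub, mul_one, hHP, sub_zero] at h
  exact sub_eq_self.mp h.symm

theorem commute_kerProj_of_commute (hHP : H * P₀ = 0) (hGH : G * H = 1 - P₀) (hHG : H * G = 1 - P₀)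
    (hK : Commute K H) : Commute K P₀ := by
  have hPH := kerProj_mul_eq_zero hHP hGH hHG
  have h₁ : P₀ * K * (1 - P₀) = 0 := by
    rw [← hHG, ← mul_assoc, mul_assoc P₀, hK.eq, ← mul_assoc, hPH, zero_mul, zero_mul]
  have h₂ : (1 - P₀) * K * P₀ = 0 := by
    rw [← hGH, mul_assoc G, ← hK.eq, ← mul_assoc, mul_assoc, hHP, mul_zero]
  rw [mul_sub, mul_one, sub_eq_zero] at h₁
  rw [sub_mul, one_mul, sub_mul, sub_eq_zero] at h₂
  exact h₂.trans h₁.symm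

theorem commute_pinv_of_commute (hPP : P₀ * P₀ = P₀) (hHP : H * P₀ = 0)
    (hG : G = (1 - P₀) * G * (1 - P₀)) (hGH : G * H = 1 - P₀) (hHG : H * G = 1 - P₀)
    (hK : Commute K H) : Commute K G := by
  have hKP := commute_kerProj_of_commute hHP hGH hHG hK
  have hGP : G * P₀ = 0 := by
    rw [hG, mul_assoc, sub_mul 1 P₀ P₀, one_mul, hPP, sub_self, mul_zero]
  have hPG : P₀ * G = 0 := by
    rw [hG, ← mul_assoc, ← mul_assoc, mul_sub P₀ 1 P₀, mul_one, hPP, sub_self, zero_mul, zero_mul]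
  calc K * G = (1 - P₀) * K * G := by
        rw [sub_mul, sub_mul, one_mul, ← hKP.eq, mul_assoc, hPG, mul_zero, sub_zero]
    _ = G * H * K * G := by rw [hGH]
    _ = G * K * (H * G) := by rw [mul_assoc G H K, ← hK.eq]; simp only [mul_assoc]
    _ = G * K * (1 - P₀) := by rw [hHG]
    _ = G * K := by rw [mul_sub, mul_one, mul_assoc, hKP.eq, ← mul_assoc, hGP, zero_mul, sub_zero]

theorem commute_conj_pinv_of_semiconjBy (hPP : P₀ * P₀ = P₀) (hHP : H * P₀ = 0)
    (hG : G = (1 - P₀) * G * (1 - P₀)) (hGH : G * H = 1 - P₀) (hHG : H * G = 1 - P₀) {A E : R}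
    (hAA : A * A = 1) (hAH : SemiconjBy A H (H - E)) (hEH : Commute E H) :
    Commute (A * G * A) H := by
  have hGE : Commute (H - E) G :=
    commute_pinv_of_commute hPP hHP hG hGH hHG ((Commute.refl H).sub_left hEH)
  have hHA : H * A = A * (H - E) := by
    calc H * A = A * (A * H) * A := by rw [← mul_assoc, hAA, one_mul]
      _ = A * (H - E) := by rw [hAH.eq, mul_assoc, mul_assoc, hAA, mul_one]
  calc A * G * A * H = A * ((H - E) * G) * A := by
        rw [mul_assoc, hAH.eq, hGE.eq]; simp only [mul_assoc]
    _ = H * (A * G * A) := by rw [← mul_assoc, ← hHA]; simp only [mul_assoc]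

theorem kerProj_mul_mul_kerProj_mul_eq_zero (hHP : H * P₀ = 0) (hGH : G * H = 1 - P₀)
    (hHG : H * G = 1 - P₀) {M V D : R} (hMH : Commute M H) (hVH : SemiconjBy V H (H - D))
    (hVD : SemiconjBy V D (-D)) (hDH : Commute D H) :
    P₀ * M * V * P₀ * D = 0 := by
  have hPH := kerProj_mul_eq_zero hHP hGH hHG
  have hDP := commute_kerProj_of_commute hHP hGH hHG hDH
  have hDV : D * V = H * V - V * H := by rw [hVH.eq, sub_mul, sub_sub_cancel]
  calc P₀ * M * V * P₀ * D = -(P₀ * M * (D * V) * P₀) := by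
        rw [mul_assoc _ P₀ D, ← hDP.eq, ← neg_mul, ← mul_neg, ← neg_mul, ← hVD.eq]
        simp only [mul_assoc]
    _ = -(P₀ * H * M * V * P₀) + P₀ * M * V * (H * P₀) := by
        rw [hDV, mul_sub, sub_mul, neg_sub]; simp only [mul_assoc]
        rw [← mul_assoc M H, hMH.eq]; simp only [mul_assoc]; abel
    _ = 0 := by rw [hPH, hHP]; simp

theorem kerProj_mul_pinv_mul_kerProj_eq_zero (hPP : P₀ * P₀ = P₀) (hHP : H * P₀ = 0)
    (hG : G = (1 - P₀) * G * (1 - P₀)) (hGH : G * H = 1 - P₀) (hHG : H * G = 1 - P₀)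
    {A B V D E : R} (hAA : A * A = 1) (hAB : A * B = V) (hAH : SemiconjBy A H (H - E))
    (hEH : Commute E H) (hVH : SemiconjBy V H (H - D)) (hVD : SemiconjBy V D (-D))
    (hDH : Commute D H) (hD : IsUnit D) :
    P₀ * A * G * B * P₀ = 0 := by
  have hM := commute_conj_pinv_of_semiconjBy hPP hHP hG hGH hHG hAA hAH hEH
  have h := kerProj_mul_mul_kerProj_mul_eq_zero hHP hGH hHG hM hVH hVD hDH
  rw [hD.mul_left_eq_zero, ← hAB] at h
  calc P₀ * A * G * B * P₀ = P₀ * (A * G * A) * (A * B) * P₀ := by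
        simp only [mul_assoc]; rw [← mul_assoc A A, hAA, one_mul]
    _ = 0 := h

end PseudoInverse

theorem isUnit_smul_add_smul {K R : Type*} [Field K] [Ring R] [Algebra K R] {s t : R}
    (hs : s * s = 1) (ht : t * t = 1) (hst : Commute s t) {β γ : K} (h : β ^ 2 ≠ γ ^ 2) :
    IsUnit (β • s + γ • t) := by
  have key : (β • s + γ • t) * (β • s - γ • t) = (β ^ 2 - γ ^ 2) • 1 := by
    simp only [add_mul, mul_sub, smul_mul_smul_comm, hs, ht, hst.eq]
    module
  have key' : (β • s - γ • t) * (β • s + γ • t) = (β ^ 2 - γ ^ 2) • 1 := by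
    simp only [sub_mul, mul_add, smul_mul_smul_comm, hs, ht, hst.eq]
    module
  have hne : β ^ 2 - γ ^ 2 ≠ 0 := sub_ne_zero.mpr h
  refine isUnit_iff_exists.mpr ⟨(β ^ 2 - γ ^ 2)⁻¹ • (β • s - γ • t), ?_, ?_⟩
  · rw [mul_smul_comm, key, smul_smul, inv_mul_cancel₀ hne, one_smul]
  · rw [smul_mul_assoc, key', smul_smul, inv_mul_cancel₀ hne, one_smul]

section SemiconjBy

variable {R : Type*} [Ring R] {u v H S T : R}

theorem SemiconjBy.mul_sub_add (hu : SemiconjBy u H (H - S)) (hv : SemiconjBy v H (H - T))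
    (huT : Commute u T) : SemiconjBy (u * v) H (H - (S + T)) := by
  have h := hu.sub_right huT
  rw [sub_sub] at h
  exact h.mul_left hv

theorem Commute.mul_of_semiconjBy_sub (hu : SemiconjBy u H (H - T)) (hv : SemiconjBy v H (H - T))
    (huT : SemiconjBy u T (-T)) : Commute (u * v) H := by
  have h := hu.sub_right huT
  rw [sub_neg_eq_add, sub_add_cancel] at h
  exact h.mul_left hv

end SemiconjBy

section PauliAt

variable {ι : Type*} [Fintype ι] [DecidableEq ι]

theorem pauliAt_mul_apply (A : Matrix (Fin 2) (Fin 2) ℂ) (i : ι)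
    (M : Matrix (ι → Fin 2) (ι → Fin 2) ℂ) (f g : ι → Fin 2) :
    (pauliAt A i * M) f g = ∑ x, A (f i) x * M (Function.update f i x) g := by
  have hrow : ∀ f', (∀ j ∈ Finset.univ.erase i, f j = f' j) ↔
      f' ∈ Finset.univ.image (Function.update f i) := by
    simp [Function.eq_update_iff, eq_comm]
  calc (pauliAt A i * M) f g
      = ∑ f' ∈ Finset.univ.image (Function.update f i), A (f i) (f' i) * M f' g := by
        simp only [mul_apply, pauliAt, Finset.prod_boole, mul_ite, ite_mul, mul_one, mul_zero,
          zero_mul, hrow]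
        rw [Finset.sum_ite_mem, Finset.univ_inter]
    _ = ∑ x, A (f i) x * M (Function.update f i x) g := by
        rw [Finset.sum_image fun x _ y _ h => Function.update_injective f i h]
        simp

theorem pauliAt_mul_pauliAt (A B : Matrix (Fin 2) (Fin 2) ℂ) (i : ι) :
    pauliAt A i * pauliAt B i = pauliAt (A * B) i := by
  ext f g
  have hrest : ∀ x, ∏ j ∈ Finset.univ.erase i,
      (if Function.update f i x j = g j then (1 : ℂ) else 0) =
      ∏ j ∈ Finset.univ.erase i, (if f j = g j then 1 else 0) := fun x =>
    Finset.prod_congr rfl fun j hj => by rw [Function.update_of_ne (Finset.ne_of_mem_erase hj)]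
  rw [pauliAt_mul_apply]
  simp only [pauliAt, Function.update_self, hrest, mul_apply, Finset.sum_mul, mul_assoc]

theorem pauliAt_mul_pauliAt_apply_of_ne (A B : Matrix (Fin 2) (Fin 2) ℂ) {i i' : ι} (h : i ≠ i')
    (f g : ι → Fin 2) :
    (pauliAt A i * pauliAt B i') f g = A (f i) (g i) * B (f i') (g i') *
      ∏ j ∈ (Finset.univ.erase i).erase i', (if f j = g j then 1 else 0) := by
  have hrest : ∀ x, ∏ j ∈ Finset.univ.erase i',
      (if Function.update f i x j = g j then (1 : ℂ) else 0) =
      (if x = g i then 1 else 0) *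
        ∏ j ∈ (Finset.univ.erase i').erase i, (if f j = g j then 1 else 0) := by
    intro x
    rw [← Finset.mul_prod_erase _ _ (Finset.mem_erase.mpr ⟨h, Finset.mem_univ i⟩),
      Function.update_self]
    congr 1
    exact Finset.prod_congr rfl fun j hj => by
      rw [Function.update_of_ne (Finset.ne_of_mem_erase hj)]
  rw [pauliAt_mul_apply]
  simp only [pauliAt, Function.update_of_ne h.symm, hrest, mul_ite, mul_zero, ite_mul, zero_mul,
    Finset.sum_ite_eq', Finset.mem_univ, if_true, Finset.erase_right_comm]
  ring

theorem commute_pauliAt_pauliAt_of_ne (A B : Matrix (Fin 2) (Fin 2) ℂ) {i i' : ι} (h : i ≠ i') :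
    Commute (pauliAt A i) (pauliAt B i') := by
  ext f g
  rw [pauliAt_mul_pauliAt_apply_of_ne A B h, pauliAt_mul_pauliAt_apply_of_ne B A h.symm,
    Finset.erase_right_comm]
  ring

theorem commute_pauliAt_pauliAt (A : Matrix (Fin 2) (Fin 2) ℂ) (i i' : ι) :
    Commute (pauliAt A i) (pauliAt A i') := by
  obtain rfl | h := eq_or_ne i i'
  · exact Commute.refl _
  · exact commute_pauliAt_pauliAt_of_ne A A h

theorem pauliAt_one (i : ι) : pauliAt (1 : Matrix (Fin 2) (Fin 2) ℂ) i = 1 := by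
  ext f g
  rw [pauliAt, one_apply, one_apply,
    Finset.mul_prod_erase _ (fun j => if f j = g j then (1 : ℂ) else 0) (Finset.mem_univ i),
    Finset.prod_boole]
  simp [funext_iff]

theorem pauliAt_neg (A : Matrix (Fin 2) (Fin 2) ℂ) (i : ι) : pauliAt (-A) i = -pauliAt A i := by
  ext f g
  simp [pauliAt]

theorem pauliAt_mul_self {A : Matrix (Fin 2) (Fin 2) ℂ} (hA : A * A = 1) (i : ι) :
    pauliAt A i * pauliAt A i = 1 := by
  rw [pauliAt_mul_pauliAt, hA, pauliAt_one]

theorem semiconjBy_pauliAt_pauliAt {A B : Matrix (Fin 2) (Fin 2) ℂ} (hAB : A * B = -(B * A))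
    (i : ι) : SemiconjBy (pauliAt A i) (pauliAt B i) (-pauliAt B i) := by
  rw [SemiconjBy, pauliAt_mul_pauliAt, neg_mul, pauliAt_mul_pauliAt, hAB, pauliAt_neg]

theorem semiconjBy_pauliAt_mul_pauliAt_left {A B : Matrix (Fin 2) (Fin 2) ℂ}
    (hAB : A * B = -(B * A)) {i i' : ι} (h : i ≠ i') :
    SemiconjBy (pauliAt A i) (pauliAt B i * pauliAt B i') (-(pauliAt B i * pauliAt B i')) := by
  rw [← neg_mul]
  exact (semiconjBy_pauliAt_pauliAt hAB i).mul_right (commute_pauliAt_pauliAt_of_ne A B h)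

theorem semiconjBy_pauliAt_mul_pauliAt_right {A B : Matrix (Fin 2) (Fin 2) ℂ}
    (hAB : A * B = -(B * A)) {i i' : ι} (h : i' ≠ i) :
    SemiconjBy (pauliAt A i) (pauliAt B i' * pauliAt B i) (-(pauliAt B i' * pauliAt B i)) := by
  rw [← mul_neg]
  exact SemiconjBy.mul_right (commute_pauliAt_pauliAt_of_ne A B h.symm)
    (semiconjBy_pauliAt_pauliAt hAB i)

end PauliAt

theorem PauliX_mul_self : PauliX * PauliX = 1 := by
  ext x y; fin_cases x <;> fin_cases y <;> simp [PauliX, mul_apply, Fin.sum_univ_two]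

theorem PauliZ_mul_self : PauliZ * PauliZ = 1 := by
  ext x y; fin_cases x <;> fin_cases y <;> simp [PauliZ, mul_apply, Fin.sum_univ_two]

theorem PauliX_mul_PauliZ : PauliX * PauliZ = -(PauliZ * PauliX) := by
  ext x y; fin_cases x <;> fin_cases y <;> simp [PauliX, PauliZ, mul_apply, Fin.sum_univ_two]

section BlockHamiltonian

variable {n : ℕ}

def pairOp (A : Matrix (Fin 2) (Fin 2) ℂ) (b : Fin n) (j : Fin 4) :
    Matrix (Fin n × Fin 4 → Fin 2) (Fin n × Fin 4 → Fin 2) ℂ :=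
  if (j : ℕ) < 2 then pauliAt A (b, 0) * pauliAt A (b, 1) else pauliAt A (b, 2) * pauliAt A (b, 3)

def blockTerm (P Q : Matrix (Fin 2) (Fin 2) ℂ) (gP gQ : Fin n → ℝ) (b : Fin n) :
    Matrix (Fin n × Fin 4 → Fin 2) (Fin n × Fin 4 → Fin 2) ℂ :=
  (gP b : ℂ) • pairOp P b 0 + (gQ b : ℂ) • pairOp Q b 0 + (gP b : ℂ) • pairOp P b 2 +
    (gQ b : ℂ) • pairOp Q b 2

/-- `HpenBlocks` with `(X, Z)` replaced by an arbitrary pair `(P, Q)`: since `blockHam_comm` swaps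
the roles of the pair, every single-site statement is proved once for both Pauli types. -/
def blockHam (P Q : Matrix (Fin 2) (Fin 2) ℂ) (gP gQ : Fin n → ℝ) :
    Matrix (Fin n × Fin 4 → Fin 2) (Fin n × Fin 4 → Fin 2) ℂ :=
  ∑ b, blockTerm P Q gP gQ b

theorem HpenBlocks_eq_blockHam (gx gz : Fin n → ℝ) :
    HpenBlocks n gx gz = blockHam PauliX PauliZ gx gz := rfl

theorem blockHam_comm (P Q : Matrix (Fin 2) (Fin 2) ℂ) (gP gQ : Fin n → ℝ) :
    blockHam P Q gP gQ = blockHam Q P gQ gP :=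
  Finset.sum_congr rfl fun _ _ => by simp only [blockTerm]; abel

theorem commute_pauliAt_pairOp_of_ne (A B : Matrix (Fin 2) (Fin 2) ℂ) {b b' : Fin n} (h : b ≠ b')
    (j j' : Fin 4) : Commute (pauliAt A (b, j)) (pairOp B b' j') := by
  unfold pairOp
  split_ifs <;>
    exact (commute_pauliAt_pauliAt_of_ne _ _ (by simp [h])).mul_right
      (commute_pauliAt_pauliAt_of_ne _ _ (by simp [h]))

theorem commute_pauliAt_pairOp_of_lt_iff_not (A B : Matrix (Fin 2) (Fin 2) ℂ) (b : Fin n)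
    {j j' : Fin 4} (h : (j : ℕ) < 2 ↔ ¬(j' : ℕ) < 2) :
    Commute (pauliAt A (b, j)) (pairOp B b j') := by
  unfold pairOp
  split_ifs <;> apply Commute.mul_right <;> apply commute_pauliAt_pauliAt_of_ne <;>
    simp only [ne_eq, Prod.mk.injEq, true_and, Fin.ext_iff] <;> omega

theorem commute_pauliAt_pairOp_self (A : Matrix (Fin 2) (Fin 2) ℂ) (q : Fin n × Fin 4) (b : Fin n)
    (j : Fin 4) : Commute (pauliAt A q) (pairOp A b j) := by
  unfold pairOp
  split_ifs <;> exact (commute_pauliAt_pauliAt _ _ _).mul_right (commute_pauliAt_pauliAt _ _ _)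

theorem commute_pairOp_pairOp (A : Matrix (Fin 2) (Fin 2) ℂ) (b b' : Fin n) (j j' : Fin 4) :
    Commute (pairOp A b j) (pairOp A b' j') := by
  conv_lhs => unfold pairOp
  split_ifs <;>
    exact (commute_pauliAt_pairOp_self _ _ _ _).mul_left (commute_pauliAt_pairOp_self _ _ _ _)

theorem pairOp_mul_self {A : Matrix (Fin 2) (Fin 2) ℂ} (hA : A * A = 1) (b : Fin n) (j : Fin 4) :
    pairOp A b j * pairOp A b j = 1 := by
  unfold pairOp
  split_ifs <;>
    rw [(commute_pauliAt_pauliAt A _ _).mul_mul_mul_comm, pauliAt_mul_self hA, pauliAt_mul_self hA,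
      one_mul]

theorem semiconjBy_pauliAt_pairOp {P Q : Matrix (Fin 2) (Fin 2) ℂ} (hPQ : P * Q = -(Q * P))
    (b : Fin n) (j : Fin 4) : SemiconjBy (pauliAt P (b, j)) (pairOp Q b j) (-pairOp Q b j) := by
  fin_cases j <;> simp only [pairOp] <;> norm_num
  · exact semiconjBy_pauliAt_mul_pauliAt_left hPQ (by simp)
  · exact semiconjBy_pauliAt_mul_pauliAt_right hPQ (by simp)
  · exact semiconjBy_pauliAt_mul_pauliAt_left hPQ (by simp)
  · exact semiconjBy_pauliAt_mul_pauliAt_right hPQ (by simp)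

theorem semiconjBy_pauliAt_blockTerm {P Q : Matrix (Fin 2) (Fin 2) ℂ} (hPQ : P * Q = -(Q * P))
    (gP gQ : Fin n → ℝ) (b : Fin n) (j : Fin 4) :
    SemiconjBy (pauliAt P (b, j)) (blockTerm P Q gP gQ b)
      (blockTerm P Q gP gQ b - (2 * gQ b : ℂ) • pairOp Q b j) := by
  have hP : ∀ j', Commute (pauliAt P (b, j)) (pairOp P b j') :=
    commute_pauliAt_pairOp_self P (b, j) b
  have hQ := semiconjBy_pauliAt_pairOp hPQ b j
  by_cases hj : (j : ℕ) < 2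
  · have hj0 : pairOp Q b j = pairOp Q b 0 := by simp [pairOp, hj]
    have hQ2 := commute_pauliAt_pairOp_of_lt_iff_not P Q b (j := j) (j' := 2) (by simp [hj])
    have hflip : blockTerm P Q gP gQ b - (2 * gQ b : ℂ) • pairOp Q b 0 =
        (gP b : ℂ) • pairOp P b 0 + (gQ b : ℂ) • -pairOp Q b 0 + (gP b : ℂ) • pairOp P b 2 +
          (gQ b : ℂ) • pairOp Q b 2 := by
      rw [blockTerm]; module
    rw [hj0] at hQ ⊢
    rw [hflip]
    exact .add_right (.add_right (.add_right ((hP 0).smul_right (gP b : ℂ))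
      (hQ.smul_right (gQ b : ℂ))) ((hP 2).smul_right (gP b : ℂ))) (hQ2.smul_right (gQ b : ℂ))
  · have hj2 : pairOp Q b j = pairOp Q b 2 := by simp [pairOp, hj]
    have hQ0 := commute_pauliAt_pairOp_of_lt_iff_not P Q b (j := j) (j' := 0) (by simp [hj])
    have hflip : blockTerm P Q gP gQ b - (2 * gQ b : ℂ) • pairOp Q b 2 =
        (gP b : ℂ) • pairOp P b 0 + (gQ b : ℂ) • pairOp Q b 0 + (gP b : ℂ) • pairOp P b 2 +
          (gQ b : ℂ) • -pairOp Q b 2 := by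
      rw [blockTerm]; module
    rw [hj2] at hQ ⊢
    rw [hflip]
    exact .add_right (.add_right (.add_right ((hP 0).smul_right (gP b : ℂ))
      (hQ0.smul_right (gQ b : ℂ))) ((hP 2).smul_right (gP b : ℂ))) (hQ.smul_right (gQ b : ℂ))

theorem semiconjBy_pauliAt_blockHam {P Q : Matrix (Fin 2) (Fin 2) ℂ} (hPQ : P * Q = -(Q * P))
    (gP gQ : Fin n → ℝ) (b : Fin n) (j : Fin 4) :
    SemiconjBy (pauliAt P (b, j)) (blockHam P Q gP gQ)
      (blockHam P Q gP gQ - (2 * gQ b : ℂ) • pairOp Q b j) := by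
  have hrest : Commute (pauliAt P (b, j)) (∑ b' ∈ Finset.univ.erase b, blockTerm P Q gP gQ b') := by
    refine Commute.sum_right _ _ _ fun b' hb' => ?_
    have hb : b ≠ b' := (Finset.ne_of_mem_erase hb').symm
    have hP := commute_pauliAt_pairOp_of_ne P P hb j
    have hQ := commute_pauliAt_pairOp_of_ne P Q hb j
    exact (((hP 0).smul_right (gP b' : ℂ)).add_right ((hQ 0).smul_right (gQ b' : ℂ))).add_right
      ((hP 2).smul_right (gP b' : ℂ)) |>.add_right ((hQ 2).smul_right (gQ b' : ℂ))
  rw [blockHam, ← Finset.add_sum_erase _ _ (Finset.mem_univ b), add_sub_right_comm]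
  exact (semiconjBy_pauliAt_blockTerm hPQ gP gQ b j).add_right hrest

theorem commute_pairOp_blockHam_left {P Q : Matrix (Fin 2) (Fin 2) ℂ} (hPQ : P * Q = -(Q * P))
    (gP gQ : Fin n → ℝ) (b : Fin n) (j : Fin 4) :
    Commute (pairOp P b j) (blockHam P Q gP gQ) := by
  have h := semiconjBy_pauliAt_blockHam hPQ gP gQ b
  unfold pairOp
  split_ifs
  · exact .mul_of_semiconjBy_sub (h 0) (h 1) (by
      simpa only [smul_neg] using (semiconjBy_pauliAt_pairOp hPQ b 0).smul_right (2 * gQ b : ℂ))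
  · exact .mul_of_semiconjBy_sub (h 2) (h 3) (by
      simpa only [smul_neg] using (semiconjBy_pauliAt_pairOp hPQ b 2).smul_right (2 * gQ b : ℂ))

theorem commute_pairOp_blockHam_right {P Q : Matrix (Fin 2) (Fin 2) ℂ} (hPQ : P * Q = -(Q * P))
    (gP gQ : Fin n → ℝ) (b : Fin n) (j : Fin 4) :
    Commute (pairOp Q b j) (blockHam P Q gP gQ) := by
  rw [blockHam_comm]
  exact commute_pairOp_blockHam_left (by rw [hPQ, neg_neg]) gQ gP b j

theorem blockHam_overlapping_gadgets_eq_zero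
    {P Q : Matrix (Fin 2) (Fin 2) ℂ} (hP : P * P = 1) (hQ : Q * Q = 1) (hPQ : P * Q = -(Q * P))
    (gP gQ : Fin n → ℝ) {P₀ G : Matrix (Fin n × Fin 4 → Fin 2) (Fin n × Fin 4 → Fin 2) ℂ}
    (hPP : P₀ * P₀ = P₀) (hHP : blockHam P Q gP gQ * P₀ = 0) (hG : G = (1 - P₀) * G * (1 - P₀))
    (hGH : G * blockHam P Q gP gQ = 1 - P₀) (hHG : blockHam P Q gP gQ * G = 1 - P₀)
    {a b c : Fin n} (hab : a ≠ b) (hbc : b ≠ c) (hg : |gQ b| ≠ |gQ c|) (i j k : Fin 4) :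
    P₀ * (pauliAt Q (a, i) * pauliAt P (b, j)) * G * (pauliAt Q (a, i) * pauliAt P (c, k)) * P₀
      = 0 := by
  have hQP : Q * P = -(P * Q) := by rw [hPQ, neg_neg]
  have hQa : SemiconjBy (pauliAt Q (a, i)) (blockHam P Q gP gQ)
      (blockHam P Q gP gQ - (2 * gP a : ℂ) • pairOp P a i) := by
    simpa only [blockHam_comm Q P] using semiconjBy_pauliAt_blockHam hQP gQ gP a i
  have hPb := semiconjBy_pauliAt_blockHam hPQ gP gQ b j
  have hPc := semiconjBy_pauliAt_blockHam hPQ gP gQ c k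
  have hQaPb : Commute (pauliAt Q (a, i)) (pauliAt P (b, j)) :=
    commute_pauliAt_pauliAt_of_ne _ _ (by simp [hab])
  have hτb := semiconjBy_pauliAt_pairOp hPQ b j
  have hτc := semiconjBy_pauliAt_pairOp hPQ c k
  have hVD : SemiconjBy (pauliAt P (b, j) * pauliAt P (c, k))
      ((2 * gQ b : ℂ) • pairOp Q b j + (2 * gQ c : ℂ) • pairOp Q c k)
      (-((2 * gQ b : ℂ) • pairOp Q b j + (2 * gQ c : ℂ) • pairOp Q c k)) := by
    rw [neg_add, ← smul_neg, ← smul_neg]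
    exact .add_right
      ((hτb.mul_left (commute_pauliAt_pairOp_of_ne P Q hbc.symm k j)).smul_right (2 * gQ b : ℂ))
      ((SemiconjBy.mul_left (commute_pauliAt_pairOp_of_ne P Q hbc j k).neg_right hτc).smul_right
        (2 * gQ c : ℂ))
  have hgsq : (2 * gQ b : ℂ) ^ 2 ≠ (2 * gQ c : ℂ) ^ 2 := by
    intro h
    have h' : (2 * gQ b) ^ 2 = (2 * gQ c) ^ 2 := by exact_mod_cast h
    rw [sq_eq_sq_iff_abs_eq_abs, abs_mul, abs_mul] at h'
    exact hg (by simpa using h')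
  refine kerProj_mul_pinv_mul_kerProj_eq_zero hPP hHP hG hGH hHG
    (E := (2 * gP a : ℂ) • pairOp P a i + (2 * gQ b : ℂ) • pairOp Q b j) ?_ ?_
    (hQa.mul_sub_add hPb ((commute_pauliAt_pairOp_self Q _ b j).smul_right _)) ?_
    (hPb.mul_sub_add hPc ((commute_pauliAt_pairOp_of_ne P Q hbc j k).smul_right _)) hVD ?_
    (isUnit_smul_add_smul (pairOp_mul_self hQ b j) (pairOp_mul_self hQ c k)
      (commute_pairOp_pairOp Q b c j k) hgsq)
  · rw [hQaPb.symm.mul_mul_mul_comm, pauliAt_mul_self hQ, pauliAt_mul_self hP, one_mul]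
  · rw [hQaPb.symm.mul_mul_mul_comm, pauliAt_mul_self hQ, one_mul]
  · exact (((commute_pairOp_blockHam_left hPQ gP gQ a i).smul_left _).add_left
      ((commute_pairOp_blockHam_right hPQ gP gQ b j).smul_left _))
  · exact (((commute_pairOp_blockHam_right hPQ gP gQ b j).smul_left _).add_left
      ((commute_pairOp_blockHam_right hPQ gP gQ c k).smul_left _))

end BlockHamiltonian

theorem gadget_coexist_overlap_qubit_general (n : ℕ) (gx gz : Fin n → ℝ)
    (P₀ Hinv : Matrix (Fin n × Fin 4 → Fin 2) (Fin n × Fin 4 → Fin 2) ℂ)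
    (hidem : P₀ * P₀ = P₀)
    (hker : ∀ v : (Fin n × Fin 4 → Fin 2) → ℂ,
      (HpenBlocks n gx gz).mulVec v = 0 ↔ P₀.mulVec v = v)
    (hinv1 : Hinv = (1 - P₀) * Hinv * (1 - P₀))
    (hinv2 : Hinv * HpenBlocks n gx gz = 1 - P₀)
    (hinv3 : HpenBlocks n gx gz * Hinv = 1 - P₀)
    (a b c : Fin n) (hab : a ≠ b) (hac : a ≠ c) (hbc : b ≠ c)
    (hgzbc : |gz b| ≠ |gz c|)
    (i j k : Fin 4) :
    P₀ * (pauliAt PauliZ (a, i) * pauliAt PauliX (b, j)) * Hinv *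
        (pauliAt PauliZ (a, i) * pauliAt PauliX (c, k)) * P₀ = 0 ∧
    P₀ * (pauliAt PauliZ (a, i) * pauliAt PauliX (c, k)) * Hinv *
        (pauliAt PauliZ (a, i) * pauliAt PauliX (b, j)) * P₀ = 0 := by
  have hHP : HpenBlocks n gx gz * P₀ = 0 := Matrix.ext_iff_mulVec.mpr fun v => by
    rw [← mulVec_mulVec, zero_mulVec, hker, mulVec_mulVec, hidem]
  rw [HpenBlocks_eq_blockHam] at hHP hinv2 hinv3
  exact ⟨blockHam_overlapping_gadgets_eq_zero PauliX_mul_self PauliZ_mul_self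
      PauliX_mul_PauliZ gx gz hidem hHP hinv1 hinv2 hinv3 hab hbc hgzbc i j k,
    blockHam_overlapping_gadgets_eq_zero PauliX_mul_self PauliZ_mul_self
      PauliX_mul_PauliZ gx gz hidem hHP hinv1 hinv2 hinv3 hac hbc.symm hgzbc.symm i k j⟩

/-- Two gadget terms `A = Z_i⁽ᵃ⁾X_j⁽ᵇ⁾` and `B = Z_i⁽ᵃ⁾X_k⁽ᶜ⁾` sharing the same physical
`Z` qubit in block `a` generate no second-order transitions within the zero-eigenspace
provided `|g_z⁽ᵇ⁾| ≠ |g_z⁽ᶜ⁾|`: then `P₀ A H_pen⁻¹ B P₀ = 0` and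
`P₀ B H_pen⁻¹ A P₀ = 0`. -/
theorem gadget_coexist_overlap_qubit (n : ℕ) (gx gz : Fin n → ℝ)
    (P₀ Hinv : Matrix (Fin n × Fin 4 → Fin 2) (Fin n × Fin 4 → Fin 2) ℂ)
    (hsa : P₀.IsHermitian) (hidem : P₀ * P₀ = P₀)
    (hker : ∀ v : (Fin n × Fin 4 → Fin 2) → ℂ,
      (HpenBlocks n gx gz).mulVec v = 0 ↔ P₀.mulVec v = v)
    (hinv1 : Hinv = (1 - P₀) * Hinv * (1 - P₀))
    (hinv2 : Hinv * HpenBlocks n gx gz = 1 - P₀)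
    (hinv3 : HpenBlocks n gx gz * Hinv = 1 - P₀)
    (a b c : Fin n) (hab : a ≠ b) (hac : a ≠ c) (hbc : b ≠ c)
    (hgzbc : |gz b| ≠ |gz c|)
    (i j k : Fin 4) :
    P₀ * (pauliAt PauliZ (a, i) * pauliAt PauliX (b, j)) * Hinv *
        (pauliAt PauliZ (a, i) * pauliAt PauliX (c, k)) * P₀ = 0 ∧
    P₀ * (pauliAt PauliZ (a, i) * pauliAt PauliX (c, k)) * Hinv *
        (pauliAt PauliZ (a, i) * pauliAt PauliX (b, j)) * P₀ = 0 :=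
  gadget_coexist_overlap_qubit_general n gx gz P₀ Hinv hidem hker hinv1 hinv2 hinv3 a b c hab hac
    hbc hgzbc i j k

end
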